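/- arXiv:2407.12448 — 8 statements merged into one kernel-verified Lean document; each statement's English description precedes it below -/
import Mathlib

section
/- Let X be a type, μ, ν : X → ℝ nonnegative functions, and let N, n, C be strictly positive real numbers with ν(x) ≤ C · μ(x) for all x. Define the mixture ρ(x) := (N·μ(x) + n·ν(x)) / (N + n). Then for all x, ν(x) ≤ ((N + n)·C / (N + n·C)) · ρ(x). -/
/-! After cancelling `N + n`, the bound reads `ν x * (N + n * C) ≤ C * (N * μ x + n * ν x)`,
which is `N * ν x ≤ N * (C * μ x)`. -/

theorem mul_mixture_eq {N n C a b : ℝ} (hNn : N + n ≠ 0) :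
    ((N + n) * C / (N + n * C)) * ((N * a + n * b) / (N + n)) =
      C * (N * a + n * b) / (N + n * C) := by
  field_simp

theorem le_div_mixture_of_le_mul {N n C a b : ℝ} (hN : 0 ≤ N) (hD : 0 < N + n * C)
    (h : b ≤ C * a) : b ≤ C * (N * a + n * b) / (N + n * C) := by
  have hNb : N * b ≤ N * (C * a) := mul_le_mul_of_nonneg_left h hN
  rw [le_div_iff₀ hD]
  linarith

theorem mixture_concentratability_general
    {X : Type*} (μ ν : X → ℝ) (N n C : ℝ)
    (hN : 0 < N) (hn : 0 < n) (hC : 0 < C)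
    (hratio : ∀ x, ν x ≤ C * μ x) :
    ∀ x, ν x ≤ ((N + n) * C / (N + n * C)) * ((N * μ x + n * ν x) / (N + n)) := by
  intro x
  rw [mul_mixture_eq (by positivity)]
  exact le_div_mixture_of_le_mul hN.le (by positivity) (hratio x)

theorem mixture_concentratability
    {X : Type*} (μ ν : X → ℝ) (N n C : ℝ)
    (hμ : ∀ x, 0 ≤ μ x) (hν : ∀ x, 0 ≤ ν x)
    (hN : 0 < N) (hn : 0 < n) (hC : 0 < C)
    (hratio : ∀ x, ν x ≤ C * μ x) :
    ∀ x, ν x ≤ ((N + n) * C / (N + n * C)) * ((N * μ x + n * ν x) / (N + n)) :=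
  mixture_concentratability_general μ ν N n C hN hn hC hratio
end

section
/- Let S and A be finite nonempty types, γ ∈ [0,1), r : S × A → ℝ, P : S × A → S → ℝ a transition kernel (P(s,a,·) nonnegative with Σ_{s'} P(s,a,s') = 1 for every (s,a)), and π : S → A → ℝ a policy (π(s,·) nonnegative with Σ_a π(s,a) = 1 for every s). Let d : S × A → ℝ be a nonnegative weight function that is stationary under (P, π), i.e., for all (s',a'): Σ_{(s,a)} d(s,a)·P(s,a,s')·π(s',a') = d(s',a'). Define the Bellman operator (T^π f)(s,a) := r(s,a) + γ · Σ_{s'} P(s,a,s') · Σ_{a'} π(s',a') · f(s',a'). Then for all f, f' : S × A → ℝ, sqrt(Σ_{(s,a)} d(s,a)·((T^π f)(s,a) − (T^π f')(s,a))²) ≤ γ · sqrt(Σ_{(s,a)} d(s,a)·(f(s,a) − f'(s,a))²), i.e., T^π is a γ-contraction in the d-weighted L2 norm. -/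
/-!
Writing `K ((s, a), (s', a')) = P (s, a) s' * π s' a'` for the state-action transition kernel,
the difference `T^π f - T^π f'` is `γ` times the Markov operator `K` applied to `f - f'`.
By Jensen's inequality `(K g)² ≤ K (g²)` pointwise, and integrating against the stationary
weight `d` gives `∑ d (K g)² ≤ ∑ (d K) g² = ∑ d g²`: the Markov operator of a chain is a
contraction in `L²` of any stationary measure.
-/

open Finset

noncomputable def weightedL2Norm {X : Type*} [Fintype X] (w f : X → ℝ) : ℝ :=
  √(∑ x, w x * f x ^ 2)

section MarkovOperator

variable {X : Type*} [Fintype X]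

theorem weightedL2Norm_const_mul (w f : X → ℝ) (c : ℝ) :
    weightedL2Norm w (fun x ↦ c * f x) = |c| * weightedL2Norm w f := by
  unfold weightedL2Norm
  simp_rw [mul_pow, mul_left_comm _ (c ^ 2), ← mul_sum]
  rw [Real.sqrt_mul (sq_nonneg c), Real.sqrt_sq_eq_abs]

theorem sq_sum_mul_le_sum_mul_sq {w : X → ℝ} (hw0 : ∀ x, 0 ≤ w x) (hw1 : ∑ x, w x = 1)
    (g : X → ℝ) : (∑ x, w x * g x) ^ 2 ≤ ∑ x, w x * g x ^ 2 :=
  (even_two.convexOn_pow (𝕜 := ℝ)).map_sum_le (fun x _ ↦ hw0 x) hw1 (fun _ _ ↦ Set.mem_univ _)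

theorem weightedL2Norm_markov_le {K : X → X → ℝ} (hK0 : ∀ x y, 0 ≤ K x y)
    (hK1 : ∀ x, ∑ y, K x y = 1) {d : X → ℝ} (hd0 : ∀ x, 0 ≤ d x)
    (hstat : ∀ y, ∑ x, d x * K x y = d y) (g : X → ℝ) :
    weightedL2Norm d (fun x ↦ ∑ y, K x y * g y) ≤ weightedL2Norm d g := by
  refine Real.sqrt_le_sqrt ?_
  calc ∑ x, d x * (∑ y, K x y * g y) ^ 2
      ≤ ∑ x, d x * ∑ y, K x y * g y ^ 2 := by
        gcongr with x
        · exact hd0 x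
        · exact sq_sum_mul_le_sum_mul_sq (hK0 x) (hK1 x) g
    _ = ∑ y, (∑ x, d x * K x y) * g y ^ 2 := by
        simp_rw [mul_sum, sum_mul, mul_assoc]
        exact sum_comm
    _ = ∑ y, d y * g y ^ 2 := by simp_rw [hstat]

end MarkovOperator

section StateActionKernel

variable {S A : Type*} [Fintype S] [Fintype A]

def stateActionKernel (P : S × A → S → ℝ) (π : S → A → ℝ) (sa t : S × A) : ℝ :=
  P sa t.1 * π t.1 t.2

theorem sum_mul_sum_eq_sum_stateActionKernel_mul (P : S × A → S → ℝ) (π : S → A → ℝ)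
    (sa : S × A) (h : S × A → ℝ) :
    ∑ s', P sa s' * ∑ a', π s' a' * h (s', a') = ∑ t, stateActionKernel P π sa t * h t := by
  simp_rw [Fintype.sum_prod_type, mul_sum, stateActionKernel, mul_assoc]

theorem sum_stateActionKernel {P : S × A → S → ℝ} {π : S → A → ℝ}
    (hP1 : ∀ sa, ∑ s', P sa s' = 1) (hπ1 : ∀ s, ∑ a, π s a = 1) (sa : S × A) :
    ∑ t, stateActionKernel P π sa t = 1 := by
  simpa [hπ1, hP1] using (sum_mul_sum_eq_sum_stateActionKernel_mul P π sa 1).symm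

end StateActionKernel

theorem bellman_operator_contraction_general
    {S A : Type*} [Fintype S] [Fintype A]
    (γ : ℝ) (hγ0 : 0 ≤ γ)
    (r : S × A → ℝ) (P : S × A → S → ℝ) (π : S → A → ℝ)
    (hP0 : ∀ sa s', 0 ≤ P sa s') (hP1 : ∀ sa, ∑ s', P sa s' = 1)
    (hπ0 : ∀ s a, 0 ≤ π s a) (hπ1 : ∀ s, ∑ a, π s a = 1)
    (d : S × A → ℝ) (hd0 : ∀ sa, 0 ≤ d sa)
    (hstat : ∀ s' a', ∑ sa : S × A, d sa * P sa s' * π s' a' = d (s', a')) :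
    ∀ f f' : S × A → ℝ,
      Real.sqrt (∑ sa : S × A, d sa *
          ((r sa + γ * ∑ s', P sa s' * ∑ a', π s' a' * f (s', a')) -
           (r sa + γ * ∑ s', P sa s' * ∑ a', π s' a' * f' (s', a'))) ^ 2) ≤
        γ * Real.sqrt (∑ sa : S × A, d sa * (f sa - f' sa) ^ 2) := by
  intro f f'
  set K := stateActionKernel P π
  have hdiff : ∀ sa,
      (r sa + γ * ∑ s', P sa s' * ∑ a', π s' a' * f (s', a')) -
        (r sa + γ * ∑ s', P sa s' * ∑ a', π s' a' * f' (s', a')) =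
      γ * ∑ t, K sa t * (f t - f' t) := by
    intro sa
    simp_rw [sum_mul_sum_eq_sum_stateActionKernel_mul, mul_sub, sum_sub_distrib]
    ring
  have hK0 : ∀ sa t, 0 ≤ K sa t := fun sa t ↦ mul_nonneg (hP0 _ _) (hπ0 _ _)
  have hKstat : ∀ t, ∑ sa, d sa * K sa t = d t := fun t ↦ by
    simpa only [K, stateActionKernel, mul_assoc] using hstat t.1 t.2
  change weightedL2Norm d (fun sa ↦ _) ≤ γ * weightedL2Norm d (fun sa ↦ f sa - f' sa)
  simp_rw [hdiff, weightedL2Norm_const_mul, abs_of_nonneg hγ0]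
  gcongr
  exact weightedL2Norm_markov_le hK0 (sum_stateActionKernel hP1 hπ1) hd0 hKstat _

theorem bellman_operator_contraction
    {S A : Type*} [Fintype S] [Fintype A] [Nonempty S] [Nonempty A]
    (γ : ℝ) (hγ0 : 0 ≤ γ) (hγ1 : γ < 1)
    (r : S × A → ℝ) (P : S × A → S → ℝ) (π : S → A → ℝ)
    (hP0 : ∀ sa s', 0 ≤ P sa s') (hP1 : ∀ sa, ∑ s', P sa s' = 1)
    (hπ0 : ∀ s a, 0 ≤ π s a) (hπ1 : ∀ s, ∑ a, π s a = 1)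
    (d : S × A → ℝ) (hd0 : ∀ sa, 0 ≤ d sa)
    (hstat : ∀ s' a', ∑ sa : S × A, d sa * P sa s' * π s' a' = d (s', a')) :
    ∀ f f' : S × A → ℝ,
      Real.sqrt (∑ sa : S × A, d sa *
          ((r sa + γ * ∑ s', P sa s' * ∑ a', π s' a' * f (s', a')) -
           (r sa + γ * ∑ s', P sa s' * ∑ a', π s' a' * f' (s', a'))) ^ 2) ≤
        γ * Real.sqrt (∑ sa : S × A, d sa * (f sa - f' sa) ^ 2) :=
  bellman_operator_contraction_general γ hγ0 r P π hP0 hP1 hπ0 hπ1 d hd0 hstat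
end

section
/- Let S and A be finite nonempty types, γ ∈ [0,1), r : S × A → ℝ, and P : S × A → S → ℝ a transition kernel (P(s,a,·) nonnegative with Σ_{s'} P(s,a,s') = 1). Define the optimality Bellman operator (T f)(s,a) := r(s,a) + γ · Σ_{s'} P(s,a,s') · (max over a' of f(s',a')). Let ν : S × A → ℝ be a nonnegative weight function and define its pushforward μ(s') := Σ_{(s,a)} ν(s,a)·P(s,a,s'). Let f, f' : S × A → ℝ and let π̂ : S → A be a selection such that for every s, π̂(s) maximizes a ↦ max(f(s,a), f'(s,a)). Then sqrt(Σ_{(s,a)} ν(s,a)·((T f)(s,a) − (T f')(s,a))²) ≤ γ · sqrt(Σ_{s'} μ(s')·(f(s', π̂(s')) − f'(s', π̂(s')))²). -/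
/-!
Let `V = max f` and `V' = max f'` be the state values. Since `π̂` maximizes `max f f'`, both
`V s` and `V' s` lie between `f (s, π̂ s)` and `f' (s, π̂ s)`, so
`|V - V'| ≤ |f (·, π̂) - f' (·, π̂)|` pointwise. The rewards cancel in `T f - T f'`, leaving
`γ • P (V - V')`, and by Jensen's inequality a stochastic kernel satisfies
`‖P g‖_ν ≤ ‖g‖_μ` for the pushforward `μ` of `ν`.
-/

open Finset

noncomputable def weightedL2 {X : Type*} [Fintype X] (w f : X → ℝ) : ℝ :=
  √(∑ x, w x * f x ^ 2)

section weightedL2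

variable {X Y : Type*} [Fintype X] [Fintype Y]

theorem weightedL2_const_mul (w f : X → ℝ) (c : ℝ) :
    weightedL2 w (fun x => c * f x) = |c| * weightedL2 w f := by
  have hsum : ∑ x, w x * (c * f x) ^ 2 = c ^ 2 * ∑ x, w x * f x ^ 2 := by
    rw [mul_sum]
    exact sum_congr rfl fun x _ => by ring
  rw [weightedL2, weightedL2, hsum, Real.sqrt_mul (sq_nonneg c), Real.sqrt_sq_eq_abs]

theorem weightedL2_le_of_abs_le {w f g : X → ℝ} (hw : ∀ x, 0 ≤ w x)
    (hfg : ∀ x, |f x| ≤ |g x|) :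
    weightedL2 w f ≤ weightedL2 w g := by
  refine Real.sqrt_le_sqrt (sum_le_sum fun x _ => ?_)
  exact mul_le_mul_of_nonneg_left (sq_le_sq.mpr (hfg x)) (hw x)

theorem weightedL2_kernel_le {ν : X → ℝ} {P : X → Y → ℝ} (hν : ∀ x, 0 ≤ ν x)
    (hP0 : ∀ x y, 0 ≤ P x y) (hP1 : ∀ x, ∑ y, P x y = 1) (g : Y → ℝ) :
    weightedL2 ν (fun x => ∑ y, P x y * g y) ≤
      weightedL2 (fun y => ∑ x, ν x * P x y) g := by
  have jensen : ∀ x, (∑ y, P x y * g y) ^ 2 ≤ ∑ y, P x y * g y ^ 2 := fun x => by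
    simpa [hP1 x] using sum_sq_le_sum_mul_sum_of_sq_le_mul univ (r := fun y => P x y * g y)
      (fun y _ => hP0 x y) (fun y _ => mul_nonneg (hP0 x y) (sq_nonneg (g y)))
      (fun y _ => le_of_eq (by ring))
  refine Real.sqrt_le_sqrt ?_
  calc ∑ x, ν x * (∑ y, P x y * g y) ^ 2
      ≤ ∑ x, ν x * ∑ y, P x y * g y ^ 2 :=
        sum_le_sum fun x _ => mul_le_mul_of_nonneg_left (jensen x) (hν x)
    _ = ∑ y, (∑ x, ν x * P x y) * g y ^ 2 := by
        simp only [mul_sum, sum_mul]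
        rw [sum_comm]
        exact sum_congr rfl fun y _ => sum_congr rfl fun x _ => by ring

end weightedL2

theorem abs_sup'_sub_sup'_le_of_max_le {ι α : Type*} [AddCommGroup α] [LinearOrder α]
    [IsOrderedAddMonoid α] {s : Finset ι} (hs : s.Nonempty) {u v : ι → α} {i : ι}
    (hi : i ∈ s) (hmax : ∀ j ∈ s, max (u j) (v j) ≤ max (u i) (v i)) :
    |s.sup' hs u - s.sup' hs v| ≤ |u i - v i| := by
  have hu : s.sup' hs u ∈ Set.uIcc (u i) (v i) :=
    ⟨(min_le_left _ _).trans (le_sup' u hi),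
      sup'_le hs u fun j hj => (le_max_left _ _).trans (hmax j hj)⟩
  have hv : s.sup' hs v ∈ Set.uIcc (u i) (v i) :=
    ⟨(min_le_right _ _).trans (le_sup' v hi),
      sup'_le hs v fun j hj => (le_max_right _ _).trans (hmax j hj)⟩
  rw [Set.uIcc_comm] at hu hv
  exact Set.abs_sub_le_of_uIcc_subset_uIcc (Set.uIcc_subset_uIcc hv hu)

theorem optimality_bellman_contraction_greedy_general
    {S A : Type*} [Fintype S] [Fintype A] [Nonempty A]
    (γ : ℝ) (hγ0 : 0 ≤ γ)
    (r : S × A → ℝ) (P : S × A → S → ℝ)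
    (hP0 : ∀ sa s', 0 ≤ P sa s') (hP1 : ∀ sa, ∑ s', P sa s' = 1)
    (ν : S × A → ℝ) (hν : ∀ sa, 0 ≤ ν sa)
    (f f' : S × A → ℝ) (πhat : S → A)
    (hgreedy : ∀ s a, max (f (s, a)) (f' (s, a)) ≤ max (f (s, πhat s)) (f' (s, πhat s))) :
    Real.sqrt (∑ sa : S × A, ν sa *
        ((r sa + γ * ∑ s', P sa s' * Finset.univ.sup' Finset.univ_nonempty (fun a' => f (s', a'))) -
         (r sa + γ * ∑ s', P sa s' * Finset.univ.sup' Finset.univ_nonempty (fun a' => f' (s', a')))) ^ 2) ≤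
      γ * Real.sqrt (∑ s', (∑ sa : S × A, ν sa * P sa s') *
        (f (s', πhat s') - f' (s', πhat s')) ^ 2) := by
  set V : S → ℝ := fun s => univ.sup' univ_nonempty fun a => f (s, a)
  set V' : S → ℝ := fun s => univ.sup' univ_nonempty fun a => f' (s, a)
  have hVV' : ∀ s, |V s - V' s| ≤ |f (s, πhat s) - f' (s, πhat s)| := fun s =>
    abs_sup'_sub_sup'_le_of_max_le univ_nonempty (mem_univ _) fun a _ => hgreedy s a
  calc _ = weightedL2 ν (fun sa => γ * ∑ s', P sa s' * (V s' - V' s')) := by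
        simp only [weightedL2, mul_sub, sum_sub_distrib, add_sub_add_left_eq_sub]
        rfl
    _ = γ * weightedL2 ν (fun sa => ∑ s', P sa s' * (V s' - V' s')) := by
        rw [weightedL2_const_mul, abs_of_nonneg hγ0]
    _ ≤ γ * weightedL2 (fun s' => ∑ sa, ν sa * P sa s') (fun s' => V s' - V' s') :=
        mul_le_mul_of_nonneg_left (weightedL2_kernel_le hν hP0 hP1 _) hγ0
    _ ≤ _ := mul_le_mul_of_nonneg_left (weightedL2_le_of_abs_le
        (fun s' => sum_nonneg fun sa _ => mul_nonneg (hν sa) (hP0 sa s')) hVV') hγ0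

theorem optimality_bellman_contraction_greedy
    {S A : Type*} [Fintype S] [Fintype A] [Nonempty S] [Nonempty A]
    (γ : ℝ) (hγ0 : 0 ≤ γ) (hγ1 : γ < 1)
    (r : S × A → ℝ) (P : S × A → S → ℝ)
    (hP0 : ∀ sa s', 0 ≤ P sa s') (hP1 : ∀ sa, ∑ s', P sa s' = 1)
    (ν : S × A → ℝ) (hν : ∀ sa, 0 ≤ ν sa)
    (f f' : S × A → ℝ) (πhat : S → A)
    (hgreedy : ∀ s a, max (f (s, a)) (f' (s, a)) ≤ max (f (s, πhat s)) (f' (s, πhat s))) :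
    Real.sqrt (∑ sa : S × A, ν sa *
        ((r sa + γ * ∑ s', P sa s' * Finset.univ.sup' Finset.univ_nonempty (fun a' => f (s', a'))) -
         (r sa + γ * ∑ s', P sa s' * Finset.univ.sup' Finset.univ_nonempty (fun a' => f' (s', a')))) ^ 2) ≤
      γ * Real.sqrt (∑ s', (∑ sa : S × A, ν sa * P sa s') *
        (f (s', πhat s') - f' (s', πhat s')) ^ 2) :=
  optimality_bellman_contraction_greedy_general γ hγ0 r P hP0 hP1 ν hν f f' πhat hgreedy
end

section
/- Let X and Y be finite types. Let p₀ : X → ℝ be a strictly positive probability mass function, E : X → ℝ an energy function, Z := Σ_x p₀(x)·exp(−E(x)), and q₀(x) := p₀(x)·exp(−E(x)) / Z. Let k : X → Y → ℝ be a nonnegative kernel and define p_t(y) := Σ_x k(x,y)·p₀(x) and q_t(y) := Σ_x k(x,y)·q₀(x). Fix y with p_t(y) > 0, let the posterior be post(x|y) := k(x,y)·p₀(x) / p_t(y), and define the intermediate energy E_t(y) := −log(Σ_x post(x|y)·exp(−E(x))). Then q_t(y) = p_t(y) · exp(−E_t(y)) / Z. -/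
/-! Pushing `p₀ · e^{-E}` through the kernel gives, at `y`, the sum `∑ₓ k(x,y) p₀(x) e^{-E(x)}`,
which is `p_t(y)` times the posterior mean of `e^{-E}`. That mean is positive, so it equals
`exp (-E_t(y))`; dividing by `Z` turns the sum into `q_t(y)`. -/

open Finset

lemma sum_mul_pos_of_nonneg_of_sum_pos {ι : Type*} [Fintype ι] (a f : ι → ℝ)
    (ha : ∀ i, 0 ≤ a i) (hsum : 0 < ∑ i, a i) (hf : ∀ i, 0 < f i) :
    0 < ∑ i, a i * f i := by
  obtain ⟨i, -, hi⟩ := exists_lt_of_sum_lt (by simpa using hsum : ∑ _i : ι, (0 : ℝ) < ∑ i, a i)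
  exact sum_pos' (fun j _ => mul_nonneg (ha j) (hf j).le) ⟨i, mem_univ i, mul_pos hi (hf i)⟩

lemma sum_mul_eq_sum_mul_exp_log_weighted_mean {ι : Type*} [Fintype ι] (a f : ι → ℝ)
    (ha : ∀ i, 0 ≤ a i) (hsum : 0 < ∑ i, a i) (hf : ∀ i, 0 < f i) :
    ∑ i, a i * f i = (∑ i, a i) * Real.exp (Real.log (∑ i, a i / (∑ j, a j) * f i)) := by
  have hmean : ∑ i, a i / (∑ j, a j) * f i = (∑ i, a i * f i) / ∑ i, a i := by
    rw [sum_div]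
    exact sum_congr rfl fun i _ => div_mul_eq_mul_div _ _ _
  rw [hmean, Real.exp_log (div_pos (sum_mul_pos_of_nonneg_of_sum_pos a f ha hsum hf) hsum),
    mul_div_cancel₀ _ hsum.ne']

theorem intermediate_energy_identity_general
    {X Y : Type*} [Fintype X]
    (p₀ : X → ℝ) (hp₀ : ∀ x, 0 < p₀ x)
    (E : X → ℝ)
    (Z : ℝ)
    (q₀ : X → ℝ) (hq₀ : ∀ x, q₀ x = p₀ x * Real.exp (-E x) / Z)
    (k : X → Y → ℝ) (hk : ∀ x y, 0 ≤ k x y)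
    (pt qt : Y → ℝ)
    (hpt : ∀ y, pt y = ∑ x, k x y * p₀ x)
    (hqt : ∀ y, qt y = ∑ x, k x y * q₀ x)
    (y : Y) (hpty : 0 < pt y)
    (post : X → ℝ) (hpost : ∀ x, post x = k x y * p₀ x / pt y)
    (Et : ℝ) (hEt : Et = -Real.log (∑ x, post x * Real.exp (-E x))) :
    qt y = pt y * Real.exp (-Et) / Z := by
  have hguided : qt y = (∑ x, k x y * p₀ x * Real.exp (-E x)) / Z := by
    rw [hqt, sum_div]
    exact sum_congr rfl fun x _ => by rw [hq₀]; ring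
  have hmarginal : ∑ x, k x y * p₀ x * Real.exp (-E x) = pt y * Real.exp (-Et) := by
    rw [sum_mul_eq_sum_mul_exp_log_weighted_mean _ _ (fun x => mul_nonneg (hk x y) (hp₀ x).le)
      (hpt y ▸ hpty) (fun x => Real.exp_pos _), hEt, neg_neg, hpt]
    simp only [hpost, hpt]
  rw [hguided, hmarginal]

theorem intermediate_energy_identity
    {X Y : Type*} [Fintype X] [Fintype Y]
    (p₀ : X → ℝ) (hp₀ : ∀ x, 0 < p₀ x) (hp₀sum : ∑ x, p₀ x = 1)
    (E : X → ℝ)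
    (Z : ℝ) (hZ : Z = ∑ x, p₀ x * Real.exp (-E x))
    (q₀ : X → ℝ) (hq₀ : ∀ x, q₀ x = p₀ x * Real.exp (-E x) / Z)
    (k : X → Y → ℝ) (hk : ∀ x y, 0 ≤ k x y)
    (pt qt : Y → ℝ)
    (hpt : ∀ y, pt y = ∑ x, k x y * p₀ x)
    (hqt : ∀ y, qt y = ∑ x, k x y * q₀ x)
    (y : Y) (hpty : 0 < pt y)
    (post : X → ℝ) (hpost : ∀ x, post x = k x y * p₀ x / pt y)
    (Et : ℝ) (hEt : Et = -Real.log (∑ x, post x * Real.exp (-E x))) :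
    qt y = pt y * Real.exp (-Et) / Z :=
  intermediate_energy_identity_general p₀ hp₀ E Z q₀ hq₀ k hk pt qt hpt hqt y hpty post hpost Et hEt
end

section
/- Let S be a finite type, γ ∈ [0,1), ρ : S → ℝ a nonnegative function with Σ_s ρ(s) = 1, and K, K̃ : S → S → ℝ two row-stochastic kernels (nonnegative, rows summing to 1). Let d, d̃ : S → ℝ be nonnegative functions with Σ_s d(s) = 1 and Σ_s d̃(s) = 1 satisfying the occupancy fixed-point equations d(s') = (1−γ)·ρ(s') + γ·Σ_s d(s)·K(s,s') and d̃(s') = (1−γ)·ρ(s') + γ·Σ_s d̃(s)·K̃(s,s') for all s'. Suppose ε ≥ 0 satisfies (1/2)·Σ_{s'} |K(s,s') − K̃(s,s')| ≤ ε for every s. Then (1/2)·Σ_{s'} |d(s') − d̃(s')| ≤ γ·ε / (1 − γ). -/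
/-!
Subtracting the two fixed-point equations gives
`d - d̃ = γ ((d - d̃) K + d̃ (K - K̃))`. A stochastic kernel does not increase the `ℓ¹` norm, and
`d̃ (K - K̃)` has `ℓ¹` norm at most `2ε`, so `‖d - d̃‖₁ ≤ γ (‖d - d̃‖₁ + 2ε)`; since `γ < 1`
this rearranges to the bound.
-/

open Finset

section KernelNorm

variable {S : Type*} [Fintype S]

theorem sum_abs_sum_mul_le (μ : S → ℝ) (M : S → S → ℝ) :
    ∑ t, |∑ s, μ s * M s t| ≤ ∑ s, |μ s| * ∑ t, |M s t| :=
  calc ∑ t, |∑ s, μ s * M s t|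
      ≤ ∑ t, ∑ s, |μ s * M s t| := sum_le_sum fun t _ => abs_sum_le_sum_abs _ _
    _ = ∑ s, |μ s| * ∑ t, |M s t| := by
      rw [sum_comm]
      simp only [abs_mul, mul_sum]

theorem sum_abs_sum_mul_le_of_stochastic (μ : S → ℝ) {K : S → S → ℝ}
    (hK0 : ∀ s t, 0 ≤ K s t) (hK1 : ∀ s, ∑ t, K s t = 1) :
    ∑ t, |∑ s, μ s * K s t| ≤ ∑ s, |μ s| := by
  simpa [abs_of_nonneg (hK0 _ _), hK1] using sum_abs_sum_mul_le μ K

theorem sum_abs_sum_mul_le_of_prob {ν : S → ℝ} (hν0 : ∀ s, 0 ≤ ν s) (hν1 : ∑ s, ν s = 1)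
    {M : S → S → ℝ} {c : ℝ} (hM : ∀ s, ∑ t, |M s t| ≤ c) :
    ∑ t, |∑ s, ν s * M s t| ≤ c :=
  calc ∑ t, |∑ s, ν s * M s t|
      ≤ ∑ s, |ν s| * ∑ t, |M s t| := sum_abs_sum_mul_le ν M
    _ ≤ ∑ s, ν s * c := sum_le_sum fun s _ => by
      rw [abs_of_nonneg (hν0 s)]
      exact mul_le_mul_of_nonneg_left (hM s) (hν0 s)
    _ = c := by rw [← sum_mul, hν1, one_mul]

end KernelNorm

theorem occupancy_perturbation_bound_general
    {S : Type*} [Fintype S]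
    (γ : ℝ) (hγ0 : 0 ≤ γ) (hγ1 : γ < 1)
    (ρ : S → ℝ)
    (K Ktil : S → S → ℝ)
    (hK0 : ∀ s s', 0 ≤ K s s') (hK1 : ∀ s, ∑ s', K s s' = 1)
    (d dtil : S → ℝ)
    (hdtil0 : ∀ s, 0 ≤ dtil s) (hdtil1 : ∑ s, dtil s = 1)
    (hd : ∀ s', d s' = (1 - γ) * ρ s' + γ * ∑ s, d s * K s s')
    (hdtil : ∀ s', dtil s' = (1 - γ) * ρ s' + γ * ∑ s, dtil s * Ktil s s')
    (ε : ℝ)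
    (hmodel : ∀ s, (1 / 2) * ∑ s', |K s s' - Ktil s s'| ≤ ε) :
    (1 / 2) * ∑ s', |d s' - dtil s'| ≤ γ * ε / (1 - γ) := by
  have hdiff : ∀ t, d t - dtil t =
      γ * (∑ s, (d s - dtil s) * K s t + ∑ s, dtil s * (K s t - Ktil s t)) := fun t => by
    simp only [sub_mul, mul_sub, sum_sub_distrib]
    rw [hd t, hdtil t]
    ring
  have hmodel' : ∀ s, ∑ t, |K s t - Ktil s t| ≤ 2 * ε := fun s => by linarith [hmodel s]
  have hcontract : ∑ t, |d t - dtil t| ≤ γ * (∑ t, |d t - dtil t| + 2 * ε) :=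
    calc ∑ t, |d t - dtil t|
        ≤ γ * (∑ t, |∑ s, (d s - dtil s) * K s t| + ∑ t, |∑ s, dtil s * (K s t - Ktil s t)|) := by
          rw [← sum_add_distrib, mul_sum]
          refine sum_le_sum fun t _ => ?_
          rw [hdiff t, abs_mul, abs_of_nonneg hγ0]
          exact mul_le_mul_of_nonneg_left (abs_add_le _ _) hγ0
      _ ≤ γ * (∑ t, |d t - dtil t| + 2 * ε) := by
          gcongr ?_ * (?_ + ?_)
          · exact sum_abs_sum_mul_le_of_stochastic _ hK0 hK1
          · exact sum_abs_sum_mul_le_of_prob hdtil0 hdtil1 hmodel'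
  rw [le_div_iff₀ (by linarith)]
  linarith

theorem occupancy_perturbation_bound
    {S : Type*} [Fintype S]
    (γ : ℝ) (hγ0 : 0 ≤ γ) (hγ1 : γ < 1)
    (ρ : S → ℝ) (hρ0 : ∀ s, 0 ≤ ρ s) (hρ1 : ∑ s, ρ s = 1)
    (K Ktil : S → S → ℝ)
    (hK0 : ∀ s s', 0 ≤ K s s') (hK1 : ∀ s, ∑ s', K s s' = 1)
    (hKtil0 : ∀ s s', 0 ≤ Ktil s s') (hKtil1 : ∀ s, ∑ s', Ktil s s' = 1)
    (d dtil : S → ℝ)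
    (hd0 : ∀ s, 0 ≤ d s) (hd1 : ∑ s, d s = 1)
    (hdtil0 : ∀ s, 0 ≤ dtil s) (hdtil1 : ∑ s, dtil s = 1)
    (hd : ∀ s', d s' = (1 - γ) * ρ s' + γ * ∑ s, d s * K s s')
    (hdtil : ∀ s', dtil s' = (1 - γ) * ρ s' + γ * ∑ s, dtil s * Ktil s s')
    (ε : ℝ) (hε : 0 ≤ ε)
    (hmodel : ∀ s, (1 / 2) * ∑ s', |K s s' - Ktil s s'| ≤ ε) :
    (1 / 2) * ∑ s', |d s' - dtil s'| ≤ γ * ε / (1 - γ) :=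
  occupancy_perturbation_bound_general γ hγ0 hγ1 ρ K Ktil hK0 hK1 d dtil hdtil0 hdtil1 hd hdtil ε
    hmodel
end

section
/- Let S and A be finite nonempty types, γ ∈ [0,1), r : S × A → ℝ, P : S × A → S → ℝ a transition kernel (rows nonnegative summing to 1), and π, π' : S → A → ℝ two policies (rows nonnegative summing to 1). Let ρ₀ : S → ℝ be nonnegative. Suppose Q' : S × A → ℝ satisfies the Bellman equation for π': Q'(s,a) = r(s,a) + γ·Σ_{s'} P(s,a,s')·Σ_{a'} π'(s',a')·Q'(s',a'), and Q : S × A → ℝ satisfies the Bellman equation for π: Q(s,a) = r(s,a) + γ·Σ_{s'} P(s,a,s')·Σ_{a'} π(s',a')·Q(s',a'). Define V'(s) := Σ_a π'(s,a)·Q'(s,a) and V(s) := Σ_a π(s,a)·Q(s,a), and J(π') := Σ_s ρ₀(s)·V'(s), J(π) := Σ_s ρ₀(s)·V(s). Let d : S → ℝ be nonnegative and satisfy the (unnormalized) occupancy equation of π: d(s') = ρ₀(s') + γ·Σ_{(s,a)} d(s)·π(s,a)·P(s,a,s') for all s'. Then J(π') − J(π) = Σ_s d(s) · (V'(s) − Σ_a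 π(s,a)·Q'(s,a)). -/
/-!
Subtracting the two Bellman equations gives `Q' - Q = γ P (V' - V)`, so
`∑ d (V' - π Q') = ∑ d (V' - V) - γ ∑ d π P (V' - V)`. The occupancy equation says exactly that
`∑ d g - γ ∑ d π P g = ∑ ρ₀ g` for every `g : S → ℝ`; for `g = V' - V` this is `J(π') - J(π)`.
-/

open Finset

namespace MDP

variable {R S A : Type*} [CommRing R] [Fintype A]

def policyValue (π : S → A → R) (Q : S × A → R) (s : S) : R :=
  ∑ a, π s a * Q (s, a)

lemma policyValue_sub (π : S → A → R) (Q Q' : S × A → R) (s : S) :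
    policyValue π (Q' - Q) s = policyValue π Q' s - policyValue π Q s := by
  simp only [policyValue, Pi.sub_apply, mul_sub, sum_sub_distrib]

lemma policyValue_const_mul (π : S → A → R) (c : R) (Q : S × A → R) (s : S) :
    policyValue π (fun sa => c * Q sa) s = c * policyValue π Q s := by
  simp only [policyValue, mul_sum, mul_left_comm]

lemma sub_eq_of_bellman [Fintype S] (γ : R) (r : S × A → R) (P : S × A → S → R)
    (π π' : S → A → R) (Q Q' : S × A → R)
    (hQ' : ∀ sa, Q' sa = r sa + γ * ∑ s', P sa s' * policyValue π' Q' s')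
    (hQ : ∀ sa, Q sa = r sa + γ * ∑ s', P sa s' * policyValue π Q s') (sa : S × A) :
    Q' sa - Q sa = γ * ∑ s', P sa s' * (policyValue π' Q' s' - policyValue π Q s') := by
  simp only [hQ' sa, hQ sa, mul_sub, sum_sub_distrib]
  ring

lemma sum_mul_eq_of_occupancy [Fintype S] (γ : R) (P : S × A → S → R) (π : S → A → R)
    (ρ₀ d : S → R)
    (hocc : ∀ s', d s' = ρ₀ s' + γ * ∑ sa : S × A, d sa.1 * π sa.1 sa.2 * P sa s')
    (g : S → R) :
    ∑ s, d s * g s =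
      ∑ s, ρ₀ s * g s + γ * ∑ s, d s * policyValue π (fun sa => ∑ s', P sa s' * g s') s := by
  have hswap : ∑ s', (∑ sa : S × A, d sa.1 * π sa.1 sa.2 * P sa s') * g s' =
      ∑ s, d s * policyValue π (fun sa => ∑ s', P sa s' * g s') s := by
    simp only [policyValue, sum_mul, mul_sum, Fintype.sum_prod_type]
    rw [sum_comm]
    refine sum_congr rfl fun s _ => ?_
    rw [sum_comm]
    exact sum_congr rfl fun a _ => sum_congr rfl fun s' _ => by ring
  calc ∑ s, d s * g s
      = ∑ s, (ρ₀ s * g s + γ * ((∑ sa : S × A, d sa.1 * π sa.1 sa.2 * P sa s) * g s)) :=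
        sum_congr rfl fun s _ => by rw [hocc s]; ring
    _ = _ := by rw [sum_add_distrib, ← mul_sum, hswap]

end MDP

open MDP in
theorem performance_difference_identity_general
    {S A : Type*} [Fintype S] [Fintype A]
    (γ : ℝ)
    (r : S × A → ℝ) (P : S × A → S → ℝ)
    (π π' : S → A → ℝ)
    (ρ₀ : S → ℝ)
    (Q Q' : S × A → ℝ)
    (hQ' : ∀ s a, Q' (s, a) =
      r (s, a) + γ * ∑ s', P (s, a) s' * ∑ a', π' s' a' * Q' (s', a'))
    (hQ : ∀ s a, Q (s, a) =
      r (s, a) + γ * ∑ s', P (s, a) s' * ∑ a', π s' a' * Q (s', a'))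
    (d : S → ℝ)
    (hocc : ∀ s', d s' = ρ₀ s' + γ * ∑ sa : S × A, d sa.1 * π sa.1 sa.2 * P sa s') :
    (∑ s, ρ₀ s * ∑ a, π' s a * Q' (s, a)) - (∑ s, ρ₀ s * ∑ a, π s a * Q (s, a)) =
      ∑ s, d s * ((∑ a, π' s a * Q' (s, a)) - ∑ a, π s a * Q' (s, a)) := by
  set V' := policyValue π' Q'
  set V := policyValue π Q
  set W := policyValue π (fun sa => ∑ s', P sa s' * (V' - V) s')
  have hQdiff : Q' - Q = fun sa => γ * ∑ s', P sa s' * (V' - V) s' :=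
    funext (sub_eq_of_bellman γ r P π π' Q Q' (fun sa => hQ' sa.1 sa.2) fun sa => hQ sa.1 sa.2)
  have hVQ' : ∀ s, policyValue π Q' s = V s + γ * W s := fun s => by
    rw [← policyValue_const_mul, ← hQdiff, policyValue_sub]
    ring
  change ∑ s, ρ₀ s * V' s - ∑ s, ρ₀ s * V s = ∑ s, d s * (V' s - policyValue π Q' s)
  calc ∑ s, ρ₀ s * V' s - ∑ s, ρ₀ s * V s
      = ∑ s, ρ₀ s * (V' - V) s := by simp only [Pi.sub_apply, mul_sub, sum_sub_distrib]
    _ = ∑ s, d s * (V' - V) s - γ * ∑ s, d s * W s := by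
        rw [sum_mul_eq_of_occupancy γ P π ρ₀ d hocc (V' - V)]
        ring
    _ = ∑ s, d s * (V' s - policyValue π Q' s) := by
        simp only [hVQ', mul_sum, ← sum_sub_distrib]
        exact sum_congr rfl fun s _ => by simp only [Pi.sub_apply]; ring

theorem performance_difference_identity
    {S A : Type*} [Fintype S] [Fintype A] [Nonempty S] [Nonempty A]
    (γ : ℝ) (hγ0 : 0 ≤ γ) (hγ1 : γ < 1)
    (r : S × A → ℝ) (P : S × A → S → ℝ)
    (hP0 : ∀ sa s', 0 ≤ P sa s') (hP1 : ∀ sa, ∑ s', P sa s' = 1)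
    (π π' : S → A → ℝ)
    (hπ0 : ∀ s a, 0 ≤ π s a) (hπ1 : ∀ s, ∑ a, π s a = 1)
    (hπ'0 : ∀ s a, 0 ≤ π' s a) (hπ'1 : ∀ s, ∑ a, π' s a = 1)
    (ρ₀ : S → ℝ) (hρ₀ : ∀ s, 0 ≤ ρ₀ s)
    (Q Q' : S × A → ℝ)
    (hQ' : ∀ s a, Q' (s, a) =
      r (s, a) + γ * ∑ s', P (s, a) s' * ∑ a', π' s' a' * Q' (s', a'))
    (hQ : ∀ s a, Q (s, a) =
      r (s, a) + γ * ∑ s', P (s, a) s' * ∑ a', π s' a' * Q (s', a'))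
    (d : S → ℝ) (hd0 : ∀ s, 0 ≤ d s)
    (hocc : ∀ s', d s' = ρ₀ s' + γ * ∑ sa : S × A, d sa.1 * π sa.1 sa.2 * P sa s') :
    (∑ s, ρ₀ s * ∑ a, π' s a * Q' (s, a)) - (∑ s, ρ₀ s * ∑ a, π s a * Q (s, a)) =
      ∑ s, d s * ((∑ a, π' s a * Q' (s, a)) - ∑ a, π s a * Q' (s, a)) :=
  performance_difference_identity_general γ r P π π' ρ₀ Q Q' hQ' hQ d hocc
end

section
/- Let X be a finite type and p, q : X → ℝ strictly positive probability mass functions (Σ_x p(x) = 1 and Σ_x q(x) = 1). For D : X → ℝ with 0 < D(x) < 1 for all x, define V(D) := Σ_x p(x)·log(D(x)) + Σ_x q(x)·log(1 − D(x)). Define m(x) := (p(x) + q(x))/2, KL(u‖v) := Σ_x u(x)·log(u(x)/v(x)), and the Jensen–Shannon divergence D_JS(p,q) := (1/2)·(KL(p‖m) + KL(q‖m)). Then for every such D, V(D) ≤ −log 4 + 2·D_JS(p,q), and equality holds for D*(x) := p(x)/(p(x) + q(x)). -/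
/-!
Pointwise, `a log t ≤ a log (a / c) + (c t - a)` is `log y ≤ y - 1` at `y = c t / a`. Applying it to
`p x log D x` and `q x log (1 - D x)` with `c = p x + q x`, the linear remainders cancel, so
`V(D) ≤ V(D*)` with `D* = p / (p + q)`. Since `p` and `q` have total mass `1`, halving the
denominators of `KL(p ‖ m) + KL(q ‖ m)` contributes exactly `2 log 2 = log 4`, so the bound is `V(D*)`.
-/

open Real Finset

lemma mul_log_le_mul_log_div_add {a c t : ℝ} (ha : 0 < a) (hc : 0 < c) (ht : 0 < t) :
    a * log t ≤ a * log (a / c) + (c * t - a) := by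
  have hlog : log (c * t / a) = log t - log (a / c) := by
    rw [log_div (by positivity) ha.ne', log_mul hc.ne' ht.ne', log_div ha.ne' hc.ne']
    ring
  have key : a * log (c * t / a) ≤ c * t - a := by
    calc a * log (c * t / a) ≤ a * (c * t / a - 1) :=
          mul_le_mul_of_nonneg_left (log_le_sub_one_of_pos (by positivity)) ha.le
      _ = c * t - a := by field_simp
  rw [hlog] at key
  linarith

lemma mul_log_add_mul_log_one_sub_le {a b t : ℝ} (ha : 0 < a) (hb : 0 < b) (ht₀ : 0 < t)
    (ht₁ : t < 1) :
    a * log t + b * log (1 - t) ≤ a * log (a / (a + b)) + b * log (b / (a + b)) := by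
  have hab : 0 < a + b := add_pos ha hb
  have h₁ := mul_log_le_mul_log_div_add ha hab ht₀
  have h₂ := mul_log_le_mul_log_div_add hb hab (sub_pos.2 ht₁)
  linarith

lemma mul_log_div_half_add_mul_log_div_half {a b : ℝ} (ha : 0 < a) (hb : 0 < b) :
    a * log (a / ((a + b) / 2)) + b * log (b / ((a + b) / 2)) =
      a * log (a / (a + b)) + b * log (b / (a + b)) + (a + b) * log 2 := by
  have halve : ∀ u : ℝ, 0 < u → log (u / ((a + b) / 2)) = log (u / (a + b)) + log 2 := by
    intro u hu
    rw [div_div_eq_mul_div, mul_div_right_comm, log_mul (by positivity) two_ne_zero]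
  rw [halve a ha, halve b hb]
  ring

theorem gan_optimal_discriminator
    {X : Type*} [Fintype X]
    (p q : X → ℝ) (hp : ∀ x, 0 < p x) (hq : ∀ x, 0 < q x)
    (hpsum : ∑ x, p x = 1) (hqsum : ∑ x, q x = 1) :
    (∀ D : X → ℝ, (∀ x, 0 < D x ∧ D x < 1) →
      (∑ x, p x * Real.log (D x)) + (∑ x, q x * Real.log (1 - D x)) ≤
        -Real.log 4 + 2 * ((1 / 2) *
          ((∑ x, p x * Real.log (p x / ((p x + q x) / 2))) +
           (∑ x, q x * Real.log (q x / ((p x + q x) / 2))))))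
    ∧
    (∑ x, p x * Real.log (p x / (p x + q x))) +
      (∑ x, q x * Real.log (1 - p x / (p x + q x))) =
        -Real.log 4 + 2 * ((1 / 2) *
          ((∑ x, p x * Real.log (p x / ((p x + q x) / 2))) +
           (∑ x, q x * Real.log (q x / ((p x + q x) / 2))))) := by
  have hjs : -log 4 + 2 * ((1 / 2) *
      ((∑ x, p x * log (p x / ((p x + q x) / 2))) +
        (∑ x, q x * log (q x / ((p x + q x) / 2))))) =
      (∑ x, p x * log (p x / (p x + q x))) + ∑ x, q x * log (q x / (p x + q x)) := by
    rw [← sum_add_distrib]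
    simp only [mul_log_div_half_add_mul_log_div_half (hp _) (hq _), sum_add_distrib, ← sum_mul,
      hpsum, hqsum, log_four_eq]
    ring
  have hopt : ∀ x, 1 - p x / (p x + q x) = q x / (p x + q x) := fun x => by
    rw [one_sub_div (add_pos (hp x) (hq x)).ne', add_sub_cancel_left]
  refine ⟨fun D hD => ?_, ?_⟩
  · rw [hjs, ← sum_add_distrib, ← sum_add_distrib]
    exact sum_le_sum fun x _ =>
      mul_log_add_mul_log_one_sub_le (hp x) (hq x) (hD x).1 (hD x).2
  · simp only [hjs, hopt]
end

section
/- Let X be a finite type and μ, ν : X → ℝ strictly positive probability mass functions (Σ_x μ(x) = 1 and Σ_x ν(x) = 1). Fix a natural number K ≥ 1. For an energy function E : X → ℝ, define the population InfoNCE loss L(E) := − Σ over tuples (x₀, x₁, …, x_K) ∈ X^{K+1} of μ(x₀)·ν(x₁)·…·ν(x_K) · log( exp(−E(x₀)) / (exp(−E(x₀)) + Σ_{j=1}^K exp(−E(x_j))) ). Define E*(x) := −log(μ(x)/ν(x)). Then L(E*) ≤ L(E) for every E : X → ℝ. -/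
/-!
Writing `r = μ / ν`, a tuple `(x₀, x₁, …, x_K)` has weight `μ x₀ ∏ ν xⱼ = r x₀ ∏ ν xᵢ`, so the
InfoNCE objective is `𝔼_{y ∼ ν^{K+1}} [r(y₀) log softmax(h ∘ y)₀]` with `h = e^{-E}`. The law of `y`
is exchangeable, so the position `0` may be averaged over all `K + 1` positions; for each fixed `y`
the result `∑ᵢ r(yᵢ) log softmax(h ∘ y)ᵢ` is a cross-entropy, maximized at `h ∘ y ∝ r ∘ y` by
Gibbs' inequality. Hence `h = r`, i.e. `E = -log (μ / ν)`, minimizes the loss.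
-/

open Real Finset

theorem Real.sum_mul_log_div_sum_le {ι : Type*} [Fintype ι] {a b : ι → ℝ}
    (ha : ∀ i, 0 < a i) (hb : ∀ i, 0 < b i) :
    ∑ i, a i * log (b i / ∑ j, b j) ≤ ∑ i, a i * log (a i / ∑ j, a j) := by
  rcases isEmpty_or_nonempty ι with _ | _
  · simp
  have hA : 0 < ∑ j, a j := sum_pos (fun j _ => ha j) univ_nonempty
  have hB : 0 < ∑ j, b j := sum_pos (fun j _ => hb j) univ_nonempty
  have termwise : ∀ i, a i * log (b i / ∑ j, b j) - a i * log (a i / ∑ j, a j)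
      ≤ (∑ j, a j) * (b i / ∑ j, b j) - a i := by
    intro i
    have hq : 0 < b i / ∑ j, b j := div_pos (hb i) hB
    have hp : 0 < a i / ∑ j, a j := div_pos (ha i) hA
    calc a i * log (b i / ∑ j, b j) - a i * log (a i / ∑ j, a j)
        = a i * log ((b i / ∑ j, b j) / (a i / ∑ j, a j)) := by
          rw [log_div hq.ne' hp.ne']; ring
      _ ≤ a i * ((b i / ∑ j, b j) / (a i / ∑ j, a j) - 1) :=
          mul_le_mul_of_nonneg_left (log_le_sub_one_of_pos (div_pos hq hp)) (ha i).le
      _ = (∑ j, a j) * (b i / ∑ j, b j) - a i := by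
          field_simp [(ha i).ne']
  have total : ∑ i, ((∑ j, a j) * (b i / ∑ j, b j) - a i) = 0 := by
    rw [sum_sub_distrib, ← mul_sum, ← sum_div, div_self hB.ne', mul_one, sub_self]
  have := sum_le_sum fun i (_ : i ∈ univ) => termwise i
  rw [sum_sub_distrib, total] at this
  linarith

section Exchangeable

variable {ι X M : Type*} [Fintype ι] [DecidableEq ι] [Fintype X] [AddCommMonoid M]

theorem Fintype.sum_apply_eq_of_comp_perm (φ : (ι → X) → ι → M)
    (hφ : ∀ (σ : Equiv.Perm ι) y i, φ (y ∘ σ) i = φ y (σ i)) (i j : ι) :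
    ∑ y, φ y i = ∑ y, φ y j := by
  calc ∑ y, φ y i
      = ∑ y, φ (y ∘ Equiv.swap i j) i :=
        (Equiv.sum_comp ((Equiv.swap i j).arrowCongr (Equiv.refl X)) (φ · i)).symm
    _ = ∑ y, φ y j := by simp only [hφ, Equiv.swap_apply_left]

theorem Fintype.card_nsmul_sum_apply_eq_of_comp_perm (φ : (ι → X) → ι → M)
    (hφ : ∀ (σ : Equiv.Perm ι) y i, φ (y ∘ σ) i = φ y (σ i)) (i : ι) :
    Fintype.card ι • ∑ y, φ y i = ∑ y, ∑ j, φ y j := by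
  rw [sum_comm, ← card_univ, ← sum_const]
  exact Finset.sum_congr rfl fun j _ => Fintype.sum_apply_eq_of_comp_perm φ hφ i j

theorem sum_prod_mul_log_softmax_le (ν r h : X → ℝ) (hν : ∀ x, 0 ≤ ν x)
    (hr : ∀ x, 0 < r x) (hh : ∀ x, 0 < h x) (i : ι) :
    ∑ y : ι → X, (∏ k, ν (y k)) * (r (y i) * log (h (y i) / ∑ k, h (y k)))
      ≤ ∑ y : ι → X, (∏ k, ν (y k)) * (r (y i) * log (r (y i) / ∑ k, r (y k))) := by
  have symmetrize : ∀ g : X → ℝ,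
      Fintype.card ι • ∑ y : ι → X, (∏ k, ν (y k)) * (r (y i) * log (g (y i) / ∑ k, g (y k)))
        = ∑ y : ι → X, (∏ k, ν (y k)) * ∑ j, r (y j) * log (g (y j) / ∑ k, g (y k)) := by
    intro g
    simp only [mul_sum]
    refine Fintype.card_nsmul_sum_apply_eq_of_comp_perm
      (fun y j => (∏ k, ν (y k)) * (r (y j) * log (g (y j) / ∑ k, g (y k)))) ?_ i
    intro σ y j
    simp only [Function.comp_apply, Equiv.prod_comp σ (fun k => ν (y k)),
      Equiv.sum_comp σ (fun k => g (y k))]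
  have hcard : 0 < Fintype.card ι := Fintype.card_pos_iff.mpr ⟨i⟩
  refine (nsmul_le_nsmul_iff_right hcard.ne').mp ?_
  rw [symmetrize h, symmetrize r]
  exact sum_le_sum fun y _ => mul_le_mul_of_nonneg_left
    (sum_mul_log_div_sum_le (fun j => hr (y j)) (fun j => hh (y j)))
    (prod_nonneg fun k _ => hν (y k))

end Exchangeable

theorem sum_sum_mul_log_div_add_sum_eq {X : Type*} [Fintype X] (μ ν h : X → ℝ)
    (hν : ∀ x, ν x ≠ 0) (K : ℕ) :
    ∑ x₀ : X, ∑ xs : Fin K → X,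
        (μ x₀ * ∏ j, ν (xs j)) * log (h x₀ / (h x₀ + ∑ j, h (xs j)))
      = ∑ y : Fin (K + 1) → X,
        (∏ j, ν (y j)) * (μ (y 0) / ν (y 0) * log (h (y 0) / ∑ j, h (y j))) := by
  rw [← (Fin.consEquiv fun _ => X).sum_comp, Fintype.sum_prod_type]
  refine sum_congr rfl fun x₀ _ => sum_congr rfl fun xs _ => ?_
  simp only [Fin.consEquiv_apply, Fin.prod_univ_succ, Fin.sum_univ_succ, Fin.cons_zero,
    Fin.cons_succ]
  field_simp [hν x₀]

theorem infoNCE_population_minimizer_general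
    {X : Type*} [Fintype X]
    (μ ν : X → ℝ) (hμ : ∀ x, 0 < μ x) (hν : ∀ x, 0 < ν x)
    (K : ℕ)
    (L : (X → ℝ) → ℝ)
    (hL : ∀ E : X → ℝ,
      L E = -(∑ x₀ : X, ∑ xs : Fin K → X,
          (μ x₀ * ∏ j, ν (xs j)) *
            Real.log (Real.exp (-E x₀) /
              (Real.exp (-E x₀) + ∑ j, Real.exp (-E (xs j))))))
    (Estar : X → ℝ) (hEstar : ∀ x, Estar x = -Real.log (μ x / ν x)) :
    ∀ E : X → ℝ, L Estar ≤ L E := by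
  intro E
  have hratio : ∀ x, 0 < μ x / ν x := fun x => div_pos (hμ x) (hν x)
  have hexp : ∀ x, exp (-Estar x) = μ x / ν x := fun x => by
    rw [hEstar, neg_neg, exp_log (hratio x)]
  rw [hL E, hL Estar, neg_le_neg_iff]
  simp only [hexp]
  rw [sum_sum_mul_log_div_add_sum_eq μ ν _ (fun x => (hν x).ne'),
    sum_sum_mul_log_div_add_sum_eq μ ν _ (fun x => (hν x).ne')]
  exact sum_prod_mul_log_softmax_le ν (fun x => μ x / ν x) (fun x => exp (-E x))
    (fun x => (hν x).le) hratio (fun x => exp_pos _) 0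

theorem infoNCE_population_minimizer
    {X : Type*} [Fintype X]
    (μ ν : X → ℝ) (hμ : ∀ x, 0 < μ x) (hν : ∀ x, 0 < ν x)
    (hμsum : ∑ x, μ x = 1) (hνsum : ∑ x, ν x = 1)
    (K : ℕ) (hK : 1 ≤ K)
    (L : (X → ℝ) → ℝ)
    (hL : ∀ E : X → ℝ,
      L E = -(∑ x₀ : X, ∑ xs : Fin K → X,
          (μ x₀ * ∏ j, ν (xs j)) *
            Real.log (Real.exp (-E x₀) /
              (Real.exp (-E x₀) + ∑ j, Real.exp (-E (xs j))))))
    (Estar : X → ℝ) (hEstar : ∀ x, Estar x = -Real.log (μ x / ν x)) :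
    ∀ E : X → ℝ, L Estar ≤ L E :=
  infoNCE_population_minimizer_general μ ν hμ hν K L hL Estar hEstar
end
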